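/- (Performance Difference Lemma) For an episodic MDP (S,A,H,P,r), any two policies π and π′, and any state s ∈ S, V_1^π(s) − V_1^{π′}(s) = E_{π′}[ Σ_{h=1}^H ⟨ Q_h^π(S_h,·), π_h(·|S_h) − π′_h(·|S_h) ⟩_A | S_1 = s ], where the trajectory (S_h,A_h) inside the expectation is generated by policy π′ starting from S_1 = s, and ⟨·,·⟩_A denotes the inner product (sum) over the finite action set A. -/

import Mathlib

open MeasureTheory ProbabilityTheory Finset
open scoped NNReal ENNReal

noncomputable section

/-- Bellman operator `T_h` (one-step backup): `(T_h f)(x,a) = r_h(x,a) + E_{x'∼P_h(·|x,a)} f(x')`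
for `h ≠ H`, and `(T_H f)(x,a) = r_H(x,a)`. -/
def bellman {S A : Type*} [MeasurableSpace S] [MeasurableSpace A] (H : ℕ) (r : ℕ → S → A → ℝ)
    (P : ℕ → Kernel (S × A) S) (h : ℕ) (f : S → ℝ) : S → A → ℝ :=
  fun x a => if h = H then r h x a else r h x a + ∫ x', f x' ∂((P h) (x, a))

/-- Truncation operator `K_m f = min (max (f, 0), m)`. -/
def trunc {α : Type*} (m : ℝ) (f : α → ℝ) : α → ℝ := fun x => min (max (f x) 0) m

/-- Truncation operator `K_m` for functions of a state-action pair. -/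
def truncQ {S A : Type*} (m : ℝ) (f : S → A → ℝ) : S → A → ℝ :=
  fun x a => min (max (f x a) 0) m

/-- `(vmax f)(x) = max_{a ∈ A} f(x,a)`. -/
def vmax {S A : Type*} [Fintype A] [Nonempty A] (f : S → A → ℝ) : S → ℝ :=
  fun x => ⨆ a, f x a

/-- Operator `T_h^* f = T_h K_{H-h} (max_a f(·,a))`. -/
def bellmanStar {S A : Type*} [MeasurableSpace S] [MeasurableSpace A] [Fintype A] [Nonempty A]
    (H : ℕ) (r : ℕ → S → A → ℝ) (P : ℕ → Kernel (S × A) S) (h : ℕ)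
    (f : S → A → ℝ) : S → A → ℝ :=
  bellman H r P h (trunc ((H : ℝ) - h) (vmax f))

/-- Backward recursion for the optimal Q-function. -/
def Qback {S A : Type*} [MeasurableSpace S] [MeasurableSpace A] [Fintype A] [Nonempty A]
    (H : ℕ) (r : ℕ → S → A → ℝ) (P : ℕ → Kernel (S × A) S) : ℕ → S → A → ℝ
  | 0 => fun _ _ => 0
  | k + 1 => bellmanStar H r P (H - k) (Qback H r P k)

/-- Optimal Q-function `Q_h^*` (with `Q_{H+1}^* = 0`), via `Q_h^* = T_h^* Q_{h+1}^*`. -/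
def Qstar {S A : Type*} [MeasurableSpace S] [MeasurableSpace A] [Fintype A] [Nonempty A]
    (H : ℕ) (r : ℕ → S → A → ℝ) (P : ℕ → Kernel (S × A) S) (h : ℕ) : S → A → ℝ :=
  Qback H r P (H + 1 - h)

/-- Optimal value function `V_h^* = max_a Q_h^*(·,a)`. -/
def Vstar {S A : Type*} [MeasurableSpace S] [MeasurableSpace A] [Fintype A] [Nonempty A]
    (H : ℕ) (r : ℕ → S → A → ℝ) (P : ℕ → Kernel (S × A) S) (h : ℕ) : S → ℝ :=
  vmax (Qstar H r P h)

/-- Backward recursion for the value function of a policy (Bellman equation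
`V_h^π(x) = Σ_a π_h(a|x) (T_h V_{h+1}^π)(x,a)`). -/
def Vback {S A : Type*} [MeasurableSpace S] [MeasurableSpace A] [Fintype A] [Nonempty A]
    (H : ℕ) (r : ℕ → S → A → ℝ) (P : ℕ → Kernel (S × A) S)
    (π : ℕ → S → A → ℝ) : ℕ → S → ℝ
  | 0 => fun _ => 0
  | k + 1 => fun x => ∑ a, π (H - k) x a * bellman H r P (H - k) (Vback H r P π k) x a

/-- Value function `V_h^π` of a policy (with `V_{H+1}^π = 0`). -/
def Vpi {S A : Type*} [MeasurableSpace S] [MeasurableSpace A] [Fintype A] [Nonempty A]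
    (H : ℕ) (r : ℕ → S → A → ℝ) (P : ℕ → Kernel (S × A) S)
    (π : ℕ → S → A → ℝ) (h : ℕ) : S → ℝ :=
  Vback H r P π (H + 1 - h)

/-- Q-function `Q_h^π = T_h V_{h+1}^π` of a policy. -/
def Qpi {S A : Type*} [MeasurableSpace S] [MeasurableSpace A] [Fintype A] [Nonempty A]
    (H : ℕ) (r : ℕ → S → A → ℝ) (P : ℕ → Kernel (S × A) S)
    (π : ℕ → S → A → ℝ) (h : ℕ) : S → A → ℝ :=
  bellman H r P h (Vpi H r P π (h + 1))

/-- A (randomized, measurable) policy on a finite action set: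
`π_h(·|x)` is a probability vector for every `h, x`. -/
def IsPolicy {S A : Type*} [MeasurableSpace S] [Fintype A] (π : ℕ → S → A → ℝ) : Prop :=
  (∀ h x a, 0 ≤ π h x a) ∧ (∀ h x, ∑ a, π h x a = 1) ∧ ∀ h a, Measurable fun x => π h x a

/-- The distribution of `(x, a)` with `a ∼ π_h(·|x)`. -/
def polKer {S A : Type*} [MeasurableSpace S] [Fintype A] [MeasurableSpace A]
    (π : ℕ → S → A → ℝ) (h : ℕ) (x : S) : Measure (S × A) :=
  ∑ a, ENNReal.ofReal (π h x a) • Measure.dirac (x, a)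

/-- The law `P_h^π ν₁` of `(S_h, A_h)` when `(S_1,A_1) ∼ ν₁`, `S_{h+1} ∼ P_h(·|S_h,A_h)`
and `A_{h+1} ∼ π_{h+1}(·|S_{h+1})`. -/
def lawAt {S A : Type*} [MeasurableSpace S] [Fintype A] [MeasurableSpace A]
    (P : ℕ → Kernel (S × A) S) (π : ℕ → S → A → ℝ) (ν₁ : Measure (S × A)) :
    ℕ → Measure (S × A) :=
  fun h => Nat.rec (motive := fun _ => Measure (S × A)) ν₁
    (fun k μ => μ.bind fun z => ((P (k + 1)) z).bind (polKer π (k + 2))) (h - 1)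

/-- `L²(μ)` norm of a real function. -/
def l2 {α : Type*} [MeasurableSpace α] (μ : Measure α) (f : α → ℝ) : ℝ :=
  Real.sqrt (∫ z, f z ^ 2 ∂μ)

/-- The law of `S_h` under policy `π` starting from `S_1 = s`. -/
def stateLaw {S A : Type*} [MeasurableSpace S] [Fintype A] [MeasurableSpace A]
    (P : ℕ → Kernel (S × A) S) (π : ℕ → S → A → ℝ) (s : S) : ℕ → Measure S :=
  fun h => Nat.rec (motive := fun _ => Measure S) (Measure.dirac s)
    (fun k μ => μ.bind fun x => ∑ a, ENNReal.ofReal (π (k + 1) x a) • (P (k + 1)) (x, a))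
    (h - 1)

/-!
Write `Δ_h = V_h^π - V_h^{π'}`. The Bellman equations for `π` and `π'` give, pointwise,
`Δ_h(x) = ⟨Q_h^π(x,·), π_h(·|x) - π'_h(·|x)⟩ + ∫ Δ_{h+1} d(law of S_{h+1} given S_h = x under π')`.
Integrating against the law of `S_h` under `π'`, whose image under that one-step kernel is the
law of `S_{h+1}`, the `h`-th summand of the claim equals `E Δ_h(S_h) - E Δ_{h+1}(S_{h+1})`, and
the sum telescopes to `Δ_1(s)` because `Δ_{H+1} = 0`. Bounded rewards keep all value functions
bounded, which supplies every integrability side condition.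
-/

namespace MeasureTheory.Measure

variable {α β E : Type*} [MeasurableSpace α] [MeasurableSpace β]
  [NormedAddCommGroup E] [NormedSpace ℝ E] {μ : Measure α} {ν : α → Measure β} {f : β → E}

lemma integral_bind (hν : Measurable ν) (hf : Integrable f (μ.bind ν)) :
    ∫ y, f y ∂(μ.bind ν) = ∫ x, ∫ y, f y ∂(ν x) ∂μ := by
  let κ : Kernel α β := ⟨ν, hν⟩
  change Integrable f (κ ∘ₘ μ) at hf
  change ∫ y, f y ∂(κ ∘ₘ μ) = _
  rw [comp_eq_comp_const_apply] at hf ⊢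
  rw [Kernel.integral_comp hf, Kernel.const_apply]
  rfl

lemma integrable_integral_bind (hν : Measurable ν) (hf : Integrable f (μ.bind ν)) :
    Integrable (fun x => ∫ y, f y ∂(ν x)) μ := by
  let κ : Kernel α β := ⟨ν, hν⟩
  change Integrable f (κ ∘ₘ μ) at hf
  rw [comp_eq_comp_const_apply] at hf
  have h := hf.integral_comp
  rw [Kernel.const_apply] at h
  exact h

end MeasureTheory.Measure

section StateLaw

variable {S A : Type*} [MeasurableSpace S] [MeasurableSpace A] [Fintype A]
  {P : ℕ → Kernel (S × A) S} {σ : ℕ → S → A → ℝ}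

def nextStateLaw (P : ℕ → Kernel (S × A) S) (σ : ℕ → S → A → ℝ) (h : ℕ) (x : S) : Measure S :=
  ∑ a, ENNReal.ofReal (σ h x a) • P h (x, a)

lemma measurable_nextStateLaw {h : ℕ} (hσ : ∀ a, Measurable fun x => σ h x a) :
    Measurable (nextStateLaw P σ h) := by
  refine Measure.measurable_of_measurable_coe _ fun t ht => ?_
  simp only [nextStateLaw, Measure.finsetSum_apply, Measure.smul_apply, smul_eq_mul]
  exact Finset.measurable_sum _ fun a _ =>
    (ENNReal.measurable_ofReal.comp (hσ a)).mul
      ((Kernel.measurable_coe (P h) ht).comp measurable_prodMk_right)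

lemma isProbabilityMeasure_nextStateLaw [∀ j, IsMarkovKernel (P j)] {h : ℕ} {x : S}
    (hσ₀ : ∀ a, 0 ≤ σ h x a) (hσ₁ : ∑ a, σ h x a = 1) :
    IsProbabilityMeasure (nextStateLaw P σ h x) := by
  constructor
  simp only [nextStateLaw, Measure.finsetSum_apply, Measure.smul_apply, smul_eq_mul,
    measure_univ, mul_one]
  rw [← ENNReal.ofReal_sum_of_nonneg fun a _ => hσ₀ a, hσ₁, ENNReal.ofReal_one]

lemma integral_nextStateLaw {h : ℕ} {x : S} (hσ : ∀ a, 0 ≤ σ h x a) {f : S → ℝ}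
    (hf : ∀ a, Integrable f (P h (x, a))) :
    ∫ y, f y ∂(nextStateLaw P σ h x) = ∑ a, σ h x a * ∫ y, f y ∂(P h (x, a)) := by
  rw [nextStateLaw, integral_finsetSum_measure fun a _ =>
    (hf a).smul_measure ENNReal.ofReal_ne_top]
  refine Finset.sum_congr rfl fun a _ => ?_
  rw [integral_smul_measure, ENNReal.toReal_ofReal (hσ a), smul_eq_mul]

lemma stateLaw_succ (s : S) {h : ℕ} (hh : 1 ≤ h) :
    stateLaw P σ s (h + 1) = (stateLaw P σ s h).bind (nextStateLaw P σ h) := by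
  obtain ⟨k, rfl⟩ := Nat.exists_eq_add_of_le' hh
  rfl

lemma isProbabilityMeasure_stateLaw [∀ j, IsMarkovKernel (P j)] (hσ : IsPolicy σ) (s : S)
    (h : ℕ) : IsProbabilityMeasure (stateLaw P σ s h) := by
  induction h with
  | zero => exact Measure.dirac.isProbabilityMeasure
  | succ h ih =>
    rcases Nat.eq_zero_or_pos h with rfl | hh
    · exact Measure.dirac.isProbabilityMeasure
    · rw [stateLaw_succ s hh]
      exact isProbabilityMeasure_bind (measurable_nextStateLaw (hσ.2.2 h)).aemeasurable
        (ae_of_all _ fun x => isProbabilityMeasure_nextStateLaw (hσ.1 h x) (hσ.2.1 h x))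

end StateLaw

section ValueFunctions

variable {S A : Type*} [MeasurableSpace S] [MeasurableSpace A]
  {H : ℕ} {r : ℕ → S → A → ℝ} {P : ℕ → Kernel (S × A) S}

lemma measurable_bellman {h : ℕ} (hr : Measurable fun z : S × A => r h z.1 z.2) {f : S → ℝ}
    (hf : Measurable f) (a : A) : Measurable fun x => bellman H r P h f x a := by
  have hra : Measurable fun x => r h x a := hr.comp measurable_prodMk_right
  have hPf : Measurable fun x => ∫ y, f y ∂(P h (x, a)) :=
    (hf.stronglyMeasurable.integral_kernel (κ := P h)).measurable.comp measurable_prodMk_right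
  unfold bellman
  split_ifs
  exacts [hra, hra.add hPf]

lemma abs_bellman_le [∀ j, IsMarkovKernel (P j)] {h : ℕ} {x : S} {a : A} {R C : ℝ}
    (hr : |r h x a| ≤ R) {f : S → ℝ} (hf : ∀ y, |f y| ≤ C) (hC : 0 ≤ C) :
    |bellman H r P h f x a| ≤ R + C := by
  have hPf : |∫ y, f y ∂(P h (x, a))| ≤ C := by
    simpa using norm_integral_le_of_norm_le_const (μ := P h (x, a))
      (ae_of_all _ fun y => (Real.norm_eq_abs (f y)).trans_le (hf y))
  unfold bellman
  split_ifs
  · linarith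
  · exact (abs_add_le _ _).trans (add_le_add hr hPf)

variable [Fintype A] [Nonempty A] {σ σ' : ℕ → S → A → ℝ}

lemma measurable_Vback (hr : ∀ j, Measurable fun z : S × A => r j z.1 z.2)
    (hσ : ∀ h a, Measurable fun x => σ h x a) (k : ℕ) : Measurable (Vback H r P σ k) := by
  induction k with
  | zero => exact measurable_const
  | succ k ih =>
    exact Finset.measurable_sum _ fun a _ =>
      (hσ _ a).mul (measurable_bellman (hr _) ih a)

lemma abs_Vback_le [∀ j, IsMarkovKernel (P j)] {R : ℝ} (hr : ∀ j x a, |r j x a| ≤ R)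
    (hσ : IsPolicy σ) (k : ℕ) (x : S) : |Vback H r P σ k x| ≤ k * R := by
  have hR : 0 ≤ R := (abs_nonneg _).trans (hr 0 x (Classical.arbitrary A))
  induction k generalizing x with
  | zero => simp [Vback]
  | succ k ih =>
    calc |∑ a, σ (H - k) x a * bellman H r P (H - k) (Vback H r P σ k) x a|
        ≤ ∑ a, σ (H - k) x a * (R + k * R) := by
          refine (Finset.abs_sum_le_sum_abs _ _).trans (Finset.sum_le_sum fun a _ => ?_)
          rw [abs_mul, abs_of_nonneg (hσ.1 _ x a)]
          exact mul_le_mul_of_nonneg_left (abs_bellman_le (hr _ x a) ih (by positivity))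
            (hσ.1 _ x a)
      _ = (k + 1 : ℕ) * R := by rw [← Finset.sum_mul, hσ.2.1]; push_cast; ring

lemma integrable_Vpi [∀ j, IsMarkovKernel (P j)] {R : ℝ} (hr : ∀ j x a, |r j x a| ≤ R)
    (hrm : ∀ j, Measurable fun z : S × A => r j z.1 z.2) (hσ : IsPolicy σ) (h : ℕ)
    (μ : Measure S) [IsFiniteMeasure μ] : Integrable (Vpi H r P σ h) μ :=
  .of_bound (measurable_Vback hrm hσ.2.2 _).aestronglyMeasurable _
    (ae_of_all _ fun x => abs_Vback_le hr hσ _ x)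

lemma Vpi_eq_zero_of_lt {h : ℕ} (hh : H < h) : Vpi H r P σ h = 0 := by
  rw [Vpi, Nat.sub_eq_zero_of_le hh]
  rfl

lemma Vpi_eq_sum_mul_Qpi {h : ℕ} (h1 : 1 ≤ h) (h2 : h ≤ H) (x : S) :
    Vpi H r P σ h x = ∑ a, σ h x a * Qpi H r P σ h x a := by
  obtain ⟨k, hk⟩ : ∃ k, H + 1 - h = k + 1 := ⟨H - h, by omega⟩
  have hHk : H - k = h := by omega
  have hk' : H + 1 - (h + 1) = k := by omega
  rw [Vpi, hk, Vback, hHk, Qpi, Vpi, hk']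

lemma Qpi_sub_Qpi (h : ℕ) (x : S) (a : A) :
    Qpi H r P σ h x a - Qpi H r P σ' h x a
      = ∫ y, Vpi H r P σ (h + 1) y ∂(P h (x, a)) - ∫ y, Vpi H r P σ' (h + 1) y ∂(P h (x, a)) := by
  unfold Qpi bellman
  split_ifs with hH
  · simp [Vpi_eq_zero_of_lt (show H < h + 1 by omega)]
  · ring

end ValueFunctions

section PerformanceDifference

variable {S A : Type*} [MeasurableSpace S] [MeasurableSpace A] [Fintype A] [Nonempty A]
  {H : ℕ} {r : ℕ → S → A → ℝ} {P : ℕ → Kernel (S × A) S} [∀ j, IsMarkovKernel (P j)]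
  {π π' : ℕ → S → A → ℝ} {R : ℝ}

lemma integrable_Vpi_sub_Vpi (hr : ∀ j x a, |r j x a| ≤ R)
    (hrm : ∀ j, Measurable fun z : S × A => r j z.1 z.2) (hπ : IsPolicy π) (hπ' : IsPolicy π')
    (h : ℕ) (μ : Measure S) [IsFiniteMeasure μ] :
    Integrable (fun x => Vpi H r P π h x - Vpi H r P π' h x) μ :=
  (integrable_Vpi hr hrm hπ h μ).sub (integrable_Vpi hr hrm hπ' h μ)

lemma Vpi_sub_Vpi_eq_sum_add_integral (hr : ∀ j x a, |r j x a| ≤ R)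
    (hrm : ∀ j, Measurable fun z : S × A => r j z.1 z.2) (hπ : IsPolicy π) (hπ' : IsPolicy π')
    {h : ℕ} (h1 : 1 ≤ h) (h2 : h ≤ H) (x : S) :
    Vpi H r P π h x - Vpi H r P π' h x
      = ∑ a, Qpi H r P π h x a * (π h x a - π' h x a)
        + ∫ y, (Vpi H r P π (h + 1) y - Vpi H r P π' (h + 1) y) ∂(nextStateLaw P π' h x) := by
  have hV : ∀ {σ}, IsPolicy σ → ∀ a, Integrable (Vpi H r P σ (h + 1)) (P h (x, a)) :=
    fun hσ a => integrable_Vpi hr hrm hσ _ _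
  rw [integral_nextStateLaw (hπ'.1 h x) fun a => integrable_Vpi_sub_Vpi hr hrm hπ hπ' _ _,
    Vpi_eq_sum_mul_Qpi h1 h2, Vpi_eq_sum_mul_Qpi h1 h2, ← sum_sub_distrib, ← sum_add_distrib]
  refine sum_congr rfl fun a _ => ?_
  rw [integral_sub (hV hπ a) (hV hπ' a), ← Qpi_sub_Qpi]
  ring

lemma integral_sum_Qpi_mul_sub_eq (hr : ∀ j x a, |r j x a| ≤ R)
    (hrm : ∀ j, Measurable fun z : S × A => r j z.1 z.2) (hπ : IsPolicy π) (hπ' : IsPolicy π')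
    (s : S) {h : ℕ} (h1 : 1 ≤ h) (h2 : h ≤ H) :
    ∫ x, (∑ a, Qpi H r P π h x a * (π h x a - π' h x a)) ∂(stateLaw P π' s h)
      = ∫ x, (Vpi H r P π h x - Vpi H r P π' h x) ∂(stateLaw P π' s h)
        - ∫ x, (Vpi H r P π (h + 1) x - Vpi H r P π' (h + 1) x) ∂(stateLaw P π' s (h + 1)) := by
  have := isProbabilityMeasure_stateLaw (P := P) hπ' s h
  have := isProbabilityMeasure_stateLaw (P := P) hπ' s (h + 1)
  have hnext := integrable_Vpi_sub_Vpi (H := H) (P := P) hr hrm hπ hπ' (h + 1)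
    (stateLaw P π' s (h + 1))
  have hmeas := measurable_nextStateLaw (P := P) (hπ'.2.2 h)
  rw [stateLaw_succ s h1] at hnext ⊢
  rw [Measure.integral_bind hmeas hnext, ← integral_sub (integrable_Vpi_sub_Vpi hr hrm hπ hπ' h _)
    (Measure.integrable_integral_bind hmeas hnext)]
  exact integral_congr_ae (ae_of_all _ fun x =>
    eq_sub_of_add_eq (Vpi_sub_Vpi_eq_sum_add_integral hr hrm hπ hπ' h1 h2 x).symm)

end PerformanceDifference

/-- Performance Difference Lemma: for any two policies `π, π'` and any state `s`,
`V_1^π(s) − V_1^{π'}(s)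
  = E_{π'}[ Σ_{h=1}^H ⟨Q_h^π(S_h,·), π_h(·|S_h) − π'_h(·|S_h)⟩_A | S_1 = s ]`,
the expectation being over the trajectory generated by `π'` from `S_1 = s`. -/
theorem stmt7 {S A : Type*} [MeasurableSpace S] [Fintype A] [Nonempty A] [MeasurableSpace A]
    (H : ℕ) (hH : 1 ≤ H)
    (P : ℕ → Kernel (S × A) S) [∀ j, IsMarkovKernel (P j)]
    (r : ℕ → S → A → ℝ) (hr : ∀ j x a, r j x a ∈ Set.Icc (0 : ℝ) 1)
    (hrmeas : ∀ j, Measurable fun z : S × A => r j z.1 z.2)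
    (π π' : ℕ → S → A → ℝ) (hπ : IsPolicy π) (hπ' : IsPolicy π') (s : S) :
    Vpi H r P π 1 s - Vpi H r P π' 1 s
      = ∑ h ∈ Finset.Icc 1 H,
          ∫ x, (∑ a, Qpi H r P π h x a * (π h x a - π' h x a)) ∂(stateLaw P π' s h) := by
  have hr' : ∀ j x a, |r j x a| ≤ 1 := fun j x a =>
    abs_le.mpr ⟨by linarith [(hr j x a).1], (hr j x a).2⟩
  set gap : ℕ → ℝ := fun h =>
    ∫ x, (Vpi H r P π h x - Vpi H r P π' h x) ∂(stateLaw P π' s h)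
  have hgap_one : gap 1 = Vpi H r P π 1 s - Vpi H r P π' 1 s :=
    integral_dirac' _ s ((measurable_Vback hrmeas hπ.2.2 _).sub
      (measurable_Vback hrmeas hπ'.2.2 _)).stronglyMeasurable
  have hgap_last : gap (H + 1) = 0 := by
    simp [gap, Vpi_eq_zero_of_lt (Nat.lt_succ_self H)]
  calc Vpi H r P π 1 s - Vpi H r P π' 1 s = -∑ h ∈ Icc 1 H, (gap (h + 1) - gap h) := by
        rw [sum_Icc_sub hH, hgap_one, hgap_last]; ring
    _ = _ := by
      rw [← sum_neg_distrib]
      refine sum_congr rfl fun h hh => ?_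
      rw [integral_sum_Qpi_mul_sub_eq hr' hrmeas hπ hπ' s (mem_Icc.1 hh).1 (mem_Icc.1 hh).2]
      ring
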